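/- For all integers n ≥ 2 and k ≥ 0, and for every finitely supported function m from the positive integers to the nonnegative integers with Σ_j m(j) = n, the number of words w = w_1 w_2 … w_n over the positive integers in which each letter j occurs exactly m(j) times, whose descent set DES(w) = {i ∈ {1,…,n−1} : w_i > w_{i+1}} contains no two consecutive integers, has exactly k elements, and does not contain 1 (i.e., w has no double descents, k descents, and w_1 ≤ w_2) equals the number of such words in which instead DES(w) does not contain n−1 (i.e., w has no double descents, k descents, and w_{n−1} ≤ w_n). -/

import Mathlib

/-!
Cut the positions `1, …, n` into blocks at the points of a set `T ⊆ [1, n-1]`. A word has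
`DES(w) ⊆ T` iff it is weakly increasing on every block, so listing the blocks in reverse order, each
kept as it is, is a content-preserving bijection from the words with `DES(w) ⊆ T` onto those with
`DES(w) ⊆ n - T`. Inclusion–exclusion over subsets turns this into `β(S) = β(n - S)`, where `β(S)`
counts the words of the given content with descent set exactly `S`. The reflection `S ↦ n - S`
preserves having no two consecutive elements and the cardinality, and swaps `1` with `n - 1`, so it
matches the descent sets counted on the two sides.
-/

open Finset

/-- `S` contains no two consecutive integers. -/
def NoTwoConsec (S : Finset ℕ) : Prop := ∀ i ∈ S, i + 1 ∉ S

/-- The letter `w_i` (positions numbered `1, …, n`) of a word encoded as a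
function `Fin n → ℕ`; out-of-range positions read as `0`. -/
def wval {n : ℕ} (w : Fin n → ℕ) (i : ℕ) : ℕ :=
  if h : 1 ≤ i ∧ i ≤ n then w ⟨i - 1, by omega⟩ else 0

/-- The descent set `DES(w) = {i ∈ {1,…,n-1} : w_i > w_{i+1}}` of a word. -/
def wDES {n : ℕ} (w : Fin n → ℕ) : Finset ℕ :=
  (Finset.Icc 1 (n - 1)).filter fun i => wval w (i + 1) < wval w i

namespace WordDescents

theorem eq_of_sum_powerset_eq {α M : Type*} [DecidableEq α] [AddCancelCommMonoid M]
    {f g : Finset α → M} {U : Finset α}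
    (h : ∀ S ⊆ U, ∑ T ∈ S.powerset, f T = ∑ T ∈ S.powerset, g T) {S : Finset α} (hS : S ⊆ U) :
    f S = g S := by
  induction S using Finset.strongInduction with
  | H S ih =>
    have hsub : ∑ T ∈ S.powerset.erase S, f T = ∑ T ∈ S.powerset.erase S, g T :=
      sum_congr rfl fun T hT => by
        obtain ⟨hne, hTS⟩ := mem_erase.1 hT
        exact ih T (ssubset_of_subset_of_ne (mem_powerset.1 hTS) hne) ((mem_powerset.1 hTS).trans hS)
    have := h S hS
    rw [← add_sum_erase _ _ (mem_powerset_self S), ← add_sum_erase _ _ (mem_powerset_self S),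
      hsub] at this
    exact add_right_cancel this

def reflect (n : ℕ) (S : Finset ℕ) : Finset ℕ := S.image (n - ·)

section Reflect

variable {n : ℕ} {S : Finset ℕ}

lemma mem_reflect (hS : S ⊆ Icc 1 (n - 1)) {s : ℕ} : s ∈ reflect n S ↔ s < n ∧ n - s ∈ S := by
  simp only [reflect, mem_image]
  constructor
  · rintro ⟨t, ht, rfl⟩
    have := mem_Icc.1 (hS ht)
    exact ⟨by omega, by rwa [Nat.sub_sub_self (by omega)]⟩
  · rintro ⟨hs, hns⟩
    exact ⟨n - s, hns, by omega⟩

lemma reflect_subset_Icc (hS : S ⊆ Icc 1 (n - 1)) : reflect n S ⊆ Icc 1 (n - 1) := by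
  intro s hs
  obtain ⟨hs, hns⟩ := (mem_reflect hS).1 hs
  have := mem_Icc.1 (hS hns)
  rw [mem_Icc]
  omega

lemma reflect_reflect (hS : S ⊆ Icc 1 (n - 1)) : reflect n (reflect n S) = S := by
  ext s
  rw [mem_reflect (reflect_subset_Icc hS), mem_reflect hS]
  constructor
  · rintro ⟨hs, -, hnns⟩
    rwa [Nat.sub_sub_self hs.le] at hnns
  · intro hs
    have := mem_Icc.1 (hS hs)
    exact ⟨by omega, by omega, by rwa [Nat.sub_sub_self (by omega)]⟩

lemma card_reflect (hS : S ⊆ Icc 1 (n - 1)) : #(reflect n S) = #S :=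
  card_image_of_injOn fun a ha b hb hab => by
    have := mem_Icc.1 (hS ha)
    have := mem_Icc.1 (hS hb)
    omega

lemma one_mem_reflect_iff (hS : S ⊆ Icc 1 (n - 1)) : 1 ∈ reflect n S ↔ n - 1 ∈ S := by
  rw [mem_reflect hS]
  refine ⟨And.right, fun h => ⟨?_, h⟩⟩
  have := mem_Icc.1 (hS h)
  omega

lemma sub_one_mem_reflect_iff (hS : S ⊆ Icc 1 (n - 1)) : n - 1 ∈ reflect n S ↔ 1 ∈ S := by
  conv_rhs => rw [← reflect_reflect hS]
  exact (one_mem_reflect_iff (reflect_subset_Icc hS)).symm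

lemma noTwoConsec_reflect (hS : S ⊆ Icc 1 (n - 1)) (h : NoTwoConsec S) :
    NoTwoConsec (reflect n S) := by
  intro s hs hs1
  rw [mem_reflect hS] at hs hs1
  exact h (n - (s + 1)) hs1.2 (by rw [show n - (s + 1) + 1 = n - s by omega]; exact hs.2)

end Reflect

/-! Cut `0, …, n - 1` at the points of `T` (a cut at `t` separates `t - 1` from `t`);
`blockRev n T` lists the blocks in reverse order, keeping the order inside each block. -/
section BlockReversal

variable (n : ℕ) (T : Finset ℕ)

def blockStart (p : ℕ) : ℕ := (insert 0 {t ∈ T | t ≤ p}).max' (insert_nonempty _ _)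

def blockEnd (p : ℕ) : ℕ := (insert n {t ∈ T | p < t}).min' (insert_nonempty _ _)

def blockRev (p : ℕ) : ℕ := n - blockEnd n T p + (p - blockStart T p)

variable {n T} {p t : ℕ}

lemma blockStart_le (p : ℕ) : blockStart T p ≤ p :=
  max'_le _ _ _ fun a ha => by
    simp only [mem_insert, mem_filter] at ha
    omega

lemma le_blockStart_of_mem (ht : t ∈ T) (htp : t ≤ p) : t ≤ blockStart T p :=
  le_max' _ _ (mem_insert_of_mem (mem_filter.2 ⟨ht, htp⟩))

lemma blockStart_eq_zero_or_mem (p : ℕ) : blockStart T p = 0 ∨ blockStart T p ∈ T := by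
  have := max'_mem (insert 0 {t ∈ T | t ≤ p}) (insert_nonempty _ _)
  simp only [mem_insert, mem_filter] at this
  exact this.imp id And.left

lemma blockStart_eq {a : ℕ} (ha : a = 0 ∨ a ∈ T) (hap : a ≤ p)
    (hmax : ∀ t ∈ T, t ≤ p → t ≤ a) : blockStart T p = a :=
  le_antisymm
    (max'_le _ _ _ fun b hb => by
      simp only [mem_insert, mem_filter] at hb
      rcases hb with rfl | ⟨hb, hbp⟩
      · exact Nat.zero_le a
      · exact hmax b hb hbp)
    (le_max' _ _ (by rcases ha with rfl | ha <;> simp [*]))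

lemma blockEnd_le (p : ℕ) : blockEnd n T p ≤ n :=
  min'_le _ _ (mem_insert_self _ _)

lemma blockEnd_le_of_mem (ht : t ∈ T) (hpt : p < t) : blockEnd n T p ≤ t :=
  min'_le _ _ (mem_insert_of_mem (mem_filter.2 ⟨ht, hpt⟩))

lemma lt_blockEnd (hp : p < n) : p < blockEnd n T p :=
  lt_min'_iff _ _ |>.2 fun a ha => by
    simp only [mem_insert, mem_filter] at ha
    omega

lemma blockEnd_eq_or_mem (p : ℕ) : blockEnd n T p = n ∨ blockEnd n T p ∈ T := by
  have := min'_mem (insert n {t ∈ T | p < t}) (insert_nonempty _ _)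
  simp only [mem_insert, mem_filter] at this
  exact this.imp id And.left

lemma blockEnd_eq {b : ℕ} (hb : b = n ∨ b ∈ T) (hpb : p < b)
    (hmin : ∀ t ∈ T, p < t → b ≤ t) (hbn : b ≤ n) : blockEnd n T p = b :=
  le_antisymm
    (min'_le _ _ (by rcases hb with rfl | hb <;> simp [*]))
    (le_min' _ _ _ fun c hc => by
      simp only [mem_insert, mem_filter] at hc
      rcases hc with rfl | ⟨hc, hpc⟩
      · exact hbn
      · exact hmin c hc hpc)

lemma blockRev_lt (hp : p < n) : blockRev n T p < n := by
  have := lt_blockEnd (T := T) hp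
  unfold blockRev
  omega

theorem blockRev_reflect_blockRev (hT : T ⊆ Icc 1 (n - 1)) (hp : p < n) :
    blockRev n (reflect n T) (blockRev n T p) = p := by
  have hap := blockStart_le (T := T) p
  have hpb := lt_blockEnd (T := T) hp
  have hbn := blockEnd_le (n := n) (T := T) p
  have hcut : ∀ t ∈ T, t ≤ blockStart T p ∨ blockEnd n T p ≤ t := fun t ht =>
    (le_or_gt t p).imp (le_blockStart_of_mem ht) (blockEnd_le_of_mem ht)
  have hq : blockRev n T p = n - blockEnd n T p + (p - blockStart T p) := rfl
  have hstart : blockStart (reflect n T) (blockRev n T p) = n - blockEnd n T p := by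
    refine blockStart_eq ?_ (by omega) fun s hs hsq => ?_
    · exact (blockEnd_eq_or_mem p).imp (by omega) (mem_image_of_mem _)
    · obtain ⟨hsn, hns⟩ := (mem_reflect hT).1 hs
      have := hcut _ hns
      omega
  have hend : blockEnd n (reflect n T) (blockRev n T p) = n - blockStart T p := by
    refine blockEnd_eq ?_ (by omega) (fun s hs hqs => ?_) (by omega)
    · exact (blockStart_eq_zero_or_mem p).imp (by omega) (mem_image_of_mem _)
    · obtain ⟨hsn, hns⟩ := (mem_reflect hT).1 hs
      have := hcut _ hns
      omega
  rw [blockRev, hstart, hend]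
  omega

theorem blockRev_blockRev_reflect (hT : T ⊆ Icc 1 (n - 1)) (hp : p < n) :
    blockRev n T (blockRev n (reflect n T) p) = p := by
  simpa only [reflect_reflect hT] using blockRev_reflect_blockRev (reflect_subset_Icc hT) hp

theorem blockRev_succ_eq_iff (hp : p + 1 < n) :
    blockRev n T (p + 1) = blockRev n T p + 1 ↔ p + 1 ∉ T := by
  have := blockStart_le (T := T) p
  have := lt_blockEnd (n := n) (T := T) (p := p) (by omega)
  have := blockEnd_le (n := n) (T := T) p
  constructor
  · intro h hmem
    have := le_blockStart_of_mem hmem le_rfl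
    have := blockStart_le (T := T) (p + 1)
    have := lt_blockEnd (T := T) hp
    have := blockEnd_le_of_mem (n := n) hmem (lt_add_one p)
    unfold blockRev at h
    omega
  · intro hmem
    have hstart : blockStart T (p + 1) = blockStart T p :=
      blockStart_eq (blockStart_eq_zero_or_mem p) (by omega) fun t ht htp =>
        le_blockStart_of_mem ht (by have : t ≠ p + 1 := fun e => hmem (e ▸ ht); omega)
    have hend : blockEnd n T (p + 1) = blockEnd n T p := by
      refine blockEnd_eq (blockEnd_eq_or_mem p) ?_ (fun t ht hpt => blockEnd_le_of_mem ht (by omega))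
        (blockEnd_le p)
      rcases blockEnd_eq_or_mem (n := n) (T := T) p with h | h
      · omega
      · exact lt_of_le_of_ne (by omega) fun e => hmem (e ▸ h)
    rw [blockRev, blockRev, hstart, hend]
    omega

def blockRevPerm (hT : T ⊆ Icc 1 (n - 1)) : Equiv.Perm (Fin n) where
  toFun p := ⟨blockRev n T p, blockRev_lt p.2⟩
  invFun p := ⟨blockRev n (reflect n T) p, blockRev_lt p.2⟩
  left_inv p := Fin.ext (blockRev_reflect_blockRev hT p.2)
  right_inv p := Fin.ext (blockRev_blockRev_reflect hT p.2)

lemma blockRevPerm_reflect_symm (hT : T ⊆ Icc 1 (n - 1)) :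
    (blockRevPerm (reflect_subset_Icc hT)).symm = blockRevPerm hT :=
  Equiv.ext fun p => Fin.ext (by simp [blockRevPerm, reflect_reflect hT])

end BlockReversal

section Words

variable {n : ℕ}

lemma succ_mem_wDES_iff (w : Fin n → ℕ) {p : ℕ} (hp : p + 1 < n) :
    p + 1 ∈ wDES w ↔ w ⟨p + 1, hp⟩ < w ⟨p, by omega⟩ := by
  simp [wDES, wval, hp, hp.le, show p + 1 ≤ n - 1 by omega]

/-- Two adjacent positions in one block of `reflect n T` come from two adjacent positions in one
block of `T`, so a descent of the rearranged word is a descent of `w`. -/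
theorem wDES_comp_symm_subset {T : Finset ℕ} (hT : T ⊆ Icc 1 (n - 1)) {w : Fin n → ℕ}
    (hw : wDES w ⊆ T) : wDES (w ∘ (blockRevPerm hT).symm) ⊆ reflect n T := by
  intro i hi
  by_contra hiT
  have hi' := mem_Icc.1 (filter_subset _ _ hi)
  obtain ⟨p, rfl⟩ : ∃ p, i = p + 1 := ⟨i - 1, by omega⟩
  have hp : p + 1 < n := by omega
  set q := blockRev n (reflect n T) p
  have hstep : blockRev n (reflect n T) (p + 1) = q + 1 := (blockRev_succ_eq_iff hp).2 hiT
  have hq : q + 1 < n := hstep ▸ blockRev_lt hp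
  have hdes : q + 1 ∈ wDES w := by
    rw [succ_mem_wDES_iff _ hp] at hi
    rw [succ_mem_wDES_iff _ hq]
    convert hi using 2 <;> simp [blockRevPerm, hstep, q]
  have hback : blockRev n T (q + 1) = blockRev n T q + 1 := by
    rw [← hstep, blockRev_blockRev_reflect hT hp, blockRev_blockRev_reflect hT (by omega)]
  exact (blockRev_succ_eq_iff hq).1 hback (hw hdes)

def IsWordWithContent (m : ℕ →₀ ℕ) (w : Fin n → ℕ) : Prop :=
  (∀ i, 1 ≤ w i) ∧ ∀ j, #{i | w i = j} = m j

lemma IsWordWithContent.comp_perm {m : ℕ →₀ ℕ} {w : Fin n → ℕ} (hw : IsWordWithContent m w)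
    (e : Equiv.Perm (Fin n)) : IsWordWithContent m (w ∘ e) :=
  ⟨fun i => hw.1 (e i), fun j => (card_equiv e (by simp)).trans (hw.2 j)⟩

lemma finite_setOf_isWordWithContent (m : ℕ →₀ ℕ) :
    {w : Fin n → ℕ | IsWordWithContent m w}.Finite :=
  (Fintype.piFinset fun _ => m.support).finite_toSet.subset fun w hw =>
    Fintype.mem_piFinset.2 fun i => Finsupp.mem_support_iff.2 <| by
      rw [← hw.2 (w i)]
      exact (card_pos.2 ⟨i, by simp⟩).ne'

variable (n) in
noncomputable def wordsWithContent (m : ℕ →₀ ℕ) : Finset (Fin n → ℕ) :=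
  (finite_setOf_isWordWithContent m).toFinset

lemma mem_wordsWithContent {m : ℕ →₀ ℕ} {w : Fin n → ℕ} :
    w ∈ wordsWithContent n m ↔ IsWordWithContent m w :=
  Set.Finite.mem_toFinset _

theorem card_wDES_subset_reflect (m : ℕ →₀ ℕ) {T : Finset ℕ} (hT : T ⊆ Icc 1 (n - 1)) :
    #{w ∈ wordsWithContent n m | wDES w ⊆ reflect n T} =
      #{w ∈ wordsWithContent n m | wDES w ⊆ T} := by
  refine card_nbij' (· ∘ blockRevPerm hT) (· ∘ (blockRevPerm hT).symm) ?_ ?_ ?_ ?_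
  · intro v hv
    simp only [mem_coe, mem_filter, mem_wordsWithContent] at hv ⊢
    refine ⟨hv.1.comp_perm _, ?_⟩
    rw [← blockRevPerm_reflect_symm hT]
    simpa only [reflect_reflect hT] using wDES_comp_symm_subset (reflect_subset_Icc hT) hv.2
  · intro w hw
    simp only [mem_coe, mem_filter, mem_wordsWithContent] at hw ⊢
    exact ⟨hw.1.comp_perm _, wDES_comp_symm_subset hT hw.2⟩
  · intro v _
    simp [Function.comp_assoc]
  · intro w _
    simp [Function.comp_assoc]

theorem card_filter_wDES_eq_sum (s : Finset (Fin n → ℕ)) (P : Finset ℕ → Prop)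
    [DecidablePred P] :
    #{w ∈ s | P (wDES w)} = ∑ S ∈ (Icc 1 (n - 1)).powerset with P S, #{w ∈ s | wDES w = S} := by
  rw [card_eq_sum_card_fiberwise (f := wDES) fun w hw =>
    mem_filter.2 ⟨mem_powerset.2 (filter_subset _ _), (mem_filter.1 hw).2⟩]
  refine sum_congr rfl fun S hS => ?_
  rw [filter_filter]
  exact congrArg card (filter_congr fun w _ => and_iff_right_of_imp fun h => h ▸ (mem_filter.1 hS).2)

variable (n) in
noncomputable def numWordsWithDES (m : ℕ →₀ ℕ) (S : Finset ℕ) : ℕ :=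
  #{w ∈ wordsWithContent n m | wDES w = S}

lemma card_wDES_subset_eq_sum (m : ℕ →₀ ℕ) {S : Finset ℕ} (hS : S ⊆ Icc 1 (n - 1)) :
    #{w ∈ wordsWithContent n m | wDES w ⊆ S} = ∑ T ∈ S.powerset, numWordsWithDES n m T := by
  rw [card_filter_wDES_eq_sum _ (· ⊆ S)]
  congr 1
  ext T
  simp only [mem_filter, mem_powerset]
  exact ⟨And.right, fun h => ⟨h.trans hS, h⟩⟩

theorem numWordsWithDES_reflect (m : ℕ →₀ ℕ) {S : Finset ℕ} (hS : S ⊆ Icc 1 (n - 1)) :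
    numWordsWithDES n m (reflect n S) = numWordsWithDES n m S := by
  refine eq_of_sum_powerset_eq (f := fun T => numWordsWithDES n m (reflect n T))
    (fun S hS => ?_) hS
  have hsub : ∀ T ∈ S.powerset, T ⊆ Icc 1 (n - 1) := fun T hT => (mem_powerset.1 hT).trans hS
  have hsub' : ∀ T ∈ (reflect n S).powerset, T ⊆ Icc 1 (n - 1) := fun T hT =>
    (mem_powerset.1 hT).trans (reflect_subset_Icc hS)
  calc ∑ T ∈ S.powerset, numWordsWithDES n m (reflect n T)
      = ∑ T ∈ (reflect n S).powerset, numWordsWithDES n m T :=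
        sum_nbij' (reflect n) (reflect n)
          (fun T hT => mem_powerset.2 (image_subset_image (mem_powerset.1 hT)))
          (fun T hT => mem_powerset.2 (reflect_reflect hS ▸ image_subset_image (mem_powerset.1 hT)))
          (fun T hT => reflect_reflect (hsub T hT)) (fun T hT => reflect_reflect (hsub' T hT))
          fun _ _ => rfl
    _ = #{w ∈ wordsWithContent n m | wDES w ⊆ reflect n S} :=
        (card_wDES_subset_eq_sum m (reflect_subset_Icc hS)).symm
    _ = #{w ∈ wordsWithContent n m | wDES w ⊆ S} := card_wDES_subset_reflect m hS
    _ = ∑ T ∈ S.powerset, numWordsWithDES n m T := card_wDES_subset_eq_sum m hS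

lemma ncard_setOf_wDES_eq_sum (m : ℕ →₀ ℕ) (P : Finset ℕ → Prop) [DecidablePred P] :
    {w : Fin n → ℕ | (∀ i, 1 ≤ w i) ∧ (∀ j, #{i | w i = j} = m j) ∧ P (wDES w)}.ncard =
      ∑ S ∈ (Icc 1 (n - 1)).powerset with P S, numWordsWithDES n m S := by
  have : {w : Fin n → ℕ | (∀ i, 1 ≤ w i) ∧ (∀ j, #{i | w i = j} = m j) ∧ P (wDES w)} =
      ↑{w ∈ wordsWithContent n m | P (wDES w)} := by
    ext w
    simp only [Set.mem_ofPred_eq, mem_coe, mem_filter, mem_wordsWithContent, IsWordWithContent,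
      and_assoc]
  rw [this, Set.ncard_coe_finset, card_filter_wDES_eq_sum]
  rfl

end Words

end WordDescents

open WordDescents in
theorem words_noFirst_eq_noLast_general (n k : ℕ) (m : ℕ →₀ ℕ) :
    {w : Fin n → ℕ |
        (∀ i, 1 ≤ w i) ∧
        (∀ j, (Finset.univ.filter fun i => w i = j).card = m j) ∧
        NoTwoConsec (wDES w) ∧ (wDES w).card = k ∧ 1 ∉ wDES w}.ncard =
    {w : Fin n → ℕ |
        (∀ i, 1 ≤ w i) ∧
        (∀ j, (Finset.univ.filter fun i => w i = j).card = m j) ∧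
        NoTwoConsec (wDES w) ∧ (wDES w).card = k ∧ n - 1 ∉ wDES w}.ncard := by
  classical
  rw [ncard_setOf_wDES_eq_sum m fun S => NoTwoConsec S ∧ #S = k ∧ 1 ∉ S,
    ncard_setOf_wDES_eq_sum m fun S => NoTwoConsec S ∧ #S = k ∧ n - 1 ∉ S]
  refine sum_nbij' (reflect n) (reflect n) (fun S hS => ?_) (fun S hS => ?_)
    (fun S hS => ?_) (fun S hS => ?_) (fun S hS => ?_) <;>
    simp only [mem_filter, mem_powerset] at hS ⊢
  · exact ⟨reflect_subset_Icc hS.1, noTwoConsec_reflect hS.1 hS.2.1,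
      (card_reflect hS.1).trans hS.2.2.1, (sub_one_mem_reflect_iff hS.1).not.2 hS.2.2.2⟩
  · exact ⟨reflect_subset_Icc hS.1, noTwoConsec_reflect hS.1 hS.2.1,
      (card_reflect hS.1).trans hS.2.2.1, (one_mem_reflect_iff hS.1).not.2 hS.2.2.2⟩
  · exact reflect_reflect hS.1
  · exact reflect_reflect hS.1
  · exact (numWordsWithDES_reflect m hS.1).symm

/-- For `n ≥ 2`, `k ≥ 0`, and a finitely supported content function `m` on the
positive integers with `Σ_j m(j) = n`: the number of words `w = w₁ … w_n` over
the positive integers with content `m`, no two consecutive descents, exactly `k`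
descents and `1 ∉ DES(w)` equals the number of such words with instead
`n - 1 ∉ DES(w)`. -/
theorem words_noFirst_eq_noLast (n k : ℕ) (hn : 2 ≤ n) (m : ℕ →₀ ℕ)
    (hm0 : m 0 = 0) (hsum : (m.sum fun _ c => c) = n) :
    {w : Fin n → ℕ |
        (∀ i, 1 ≤ w i) ∧
        (∀ j, (Finset.univ.filter fun i => w i = j).card = m j) ∧
        NoTwoConsec (wDES w) ∧ (wDES w).card = k ∧ 1 ∉ wDES w}.ncard =
    {w : Fin n → ℕ |
        (∀ i, 1 ≤ w i) ∧
        (∀ j, (Finset.univ.filter fun i => w i = j).card = m j) ∧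
        NoTwoConsec (wDES w) ∧ (wDES w).card = k ∧ n - 1 ∉ wDES w}.ncard :=
  words_noFirst_eq_noLast_general n k m
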